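/- arXiv:1801.06258 — 2 statements merged into one kernel-verified Lean document; each statement's English description precedes it below -/
import Mathlib

section
/- For the SubsetSum instance, every diff from β_S to β_T under the family F(≤≥,+) has cost at least n; in particular every best diff has cost at least n. -/
open scoped Classical

/-- An operation of the family `F(≤≥,+)`: if `dir = true` the condition is `A ≤ a`,
otherwise the condition is `A ≥ a`; the modifier is the increment `B ← B + b`. -/
structure OpIneqAdd where
  dir : Bool
  a : ℝ
  b : ℝ

/-- The condition of an operation, evaluated on an `A`-value `v`. -/
def OpIneqAdd.cond (f : OpIneqAdd) (v : ℤ) : Prop :=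
  if f.dir then (v : ℝ) ≤ f.a else f.a ≤ (v : ℝ)

/-- Applying an operation: every key whose `A`-value satisfies the condition gets
its `B`-value incremented by `b`; other keys are unchanged. -/
noncomputable def OpIneqAdd.apply {K : Type*} (α : K → ℤ) (f : OpIneqAdd) (β : K → ℝ) :
    K → ℝ :=
  fun k => if f.cond (α k) then β k + f.b else β k

/-- Successive application of a finite sequence of operations. -/
noncomputable def applyOpsIneqAdd {K : Type*} (α : K → ℤ) (L : List OpIneqAdd) (β : K → ℝ) :
    K → ℝ :=
  L.foldl (fun β' f => f.apply α β') β

/-- `L` is a diff from `βS` to `βT` under `F(≤≥,+)`. -/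
def IsDiffIneqAdd {K : Type*} (α : K → ℤ) (L : List OpIneqAdd) (βS βT : K → ℝ) : Prop :=
  applyOpsIneqAdd α L βS = βT

/-- `L` is a best diff: a diff of minimum cost (the cost being the number of operations). -/
def IsBestDiffIneqAdd {K : Type*} (α : K → ℤ) (L : List OpIneqAdd) (βS βT : K → ℝ) : Prop :=
  IsDiffIneqAdd α L βS βT ∧
    ∀ L' : List OpIneqAdd, IsDiffIneqAdd α L' βS βT → L.length ≤ L'.length

/-- `A`-values of the SubsetSum instance: `α k = k` on the key set `K = {0,…,n}`. -/
def ssAlpha (n : ℕ) : Fin (n + 1) → ℤ := fun k => ((k : ℕ) : ℤ)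

/-- Source `B`-values of the SubsetSum instance: identically `0`. -/
def ssBS (n : ℕ) : Fin (n + 1) → ℝ := fun _ => 0

/-- Target `B`-values of the SubsetSum instance: `β_T k = b_k = ∑_{ℓ=0}^{k} s ℓ`. -/
noncomputable def ssBT (n : ℕ) (s : ℕ → ℤ) : Fin (n + 1) → ℝ :=
  fun k => ((∑ ℓ ∈ Finset.range ((k : ℕ) + 1), s ℓ : ℤ) : ℝ)

/-
Every operation adds its increment to a prefix `{A ≤ a}` or a suffix `{A ≥ a}` of the keys
`0, …, n`, so it changes the difference `β(j+1) - β(j)` for at most one `j`, namely the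
integer cut point of its threshold. The source differences are all `0`, while the target
differences are `s_{j+1} > 0` for every `j < n`; hence the operations of a diff need at
least `n` distinct cut points.
-/

namespace OpIneqAdd

noncomputable def cut (f : OpIneqAdd) : ℤ :=
  if f.dir then ⌊f.a⌋ else ⌈f.a⌉ - 1

theorem cond_iff (f : OpIneqAdd) (v : ℤ) :
    f.cond v ↔ if f.dir then v ≤ f.cut else f.cut < v := by
  unfold cond cut
  cases f.dir
  · simp only [Bool.false_eq_true, if_false, Int.sub_one_lt_iff, Int.ceil_le]
  · simp only [if_true, Int.le_floor]

theorem eq_cut_of_not_cond_iff_cond_add_one {f : OpIneqAdd} {v : ℤ}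
    (h : ¬(f.cond v ↔ f.cond (v + 1))) : v = f.cut := by
  rw [f.cond_iff, f.cond_iff] at h
  split_ifs at h <;> omega

end OpIneqAdd

theorem applyOpsIneqAdd_sub_applyOpsIneqAdd {K : Type*} (α : K → ℤ) (L : List OpIneqAdd)
    (β : K → ℝ) {k₁ k₂ : K} (h : ∀ f ∈ L, f.cond (α k₁) ↔ f.cond (α k₂)) :
    applyOpsIneqAdd α L β k₁ - applyOpsIneqAdd α L β k₂ = β k₁ - β k₂ := by
  induction L generalizing β with
  | nil => rfl
  | cons f L ih =>
    have hf := h f List.mem_cons_self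
    rw [applyOpsIneqAdd, List.foldl_cons, ← applyOpsIneqAdd,
      ih _ fun g hg => h g (List.mem_cons_of_mem f hg)]
    unfold OpIneqAdd.apply
    by_cases hc : f.cond (α k₁)
    · rw [if_pos hc, if_pos (hf.mp hc)]; ring
    · rw [if_neg hc, if_neg (mt hf.mpr hc)]

theorem exists_not_cond_iff_of_isDiffIneqAdd {K : Type*} {α : K → ℤ} {L : List OpIneqAdd}
    {βS βT : K → ℝ} (hL : IsDiffIneqAdd α L βS βT) {k₁ k₂ : K}
    (hne : βT k₁ - βT k₂ ≠ βS k₁ - βS k₂) :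
    ∃ f ∈ L, ¬(f.cond (α k₁) ↔ f.cond (α k₂)) := by
  by_contra! h
  exact hne (hL ▸ applyOpsIneqAdd_sub_applyOpsIneqAdd α L βS h)

theorem ssBT_succ_sub (n : ℕ) (s : ℕ → ℤ) (j : ℕ) (hj : j < n) :
    ssBT n s ⟨j + 1, by omega⟩ - ssBT n s ⟨j, by omega⟩ = s (j + 1) := by
  simp only [ssBT, Finset.sum_range_succ (n := j + 1)]
  push_cast
  ring

theorem mem_map_cut_of_isDiffIneqAdd {n : ℕ} {s : ℕ → ℤ}
    (hpos : ∀ i, 1 ≤ i → i ≤ n → 0 < s i) {L : List OpIneqAdd}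
    (hL : IsDiffIneqAdd (ssAlpha n) L (ssBS n) (ssBT n s)) {j : ℕ} (hj : j < n) :
    (j : ℤ) ∈ L.map OpIneqAdd.cut := by
  have hne : ssBT n s ⟨j + 1, by omega⟩ - ssBT n s ⟨j, by omega⟩ ≠
      ssBS n ⟨j + 1, by omega⟩ - ssBS n ⟨j, by omega⟩ := by
    rw [ssBT_succ_sub n s j hj]
    simp only [ssBS, sub_self]
    exact_mod_cast (hpos (j + 1) (by omega) hj).ne'
  obtain ⟨f, hfL, hf⟩ := exists_not_cond_iff_of_isDiffIneqAdd hL hne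
  refine List.mem_map.mpr ⟨f, hfL, ?_⟩
  simp only [ssAlpha, Nat.cast_add, Nat.cast_one] at hf
  exact (OpIneqAdd.eq_cut_of_not_cond_iff_cond_add_one fun h => hf h.symm).symm

theorem le_length_of_forall_natCast_mem {n : ℕ} {l : List ℤ}
    (h : ∀ j < n, (j : ℤ) ∈ l) : n ≤ l.length := by
  have hsub : (List.range n).map (Nat.cast : ℕ → ℤ) ⊆ l := by
    intro x hx
    obtain ⟨j, hj, rfl⟩ := List.mem_map.mp hx
    exact h j (List.mem_range.mp hj)
  simpa using ((List.nodup_range.map Nat.cast_injective).subperm hsub).length_le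

theorem subsetSum_diff_cost_lower_bound_general (n : ℕ) (s : ℕ → ℤ)
    (hpos : ∀ i, 1 ≤ i → i ≤ n → 0 < s i) :
    (∀ L : List OpIneqAdd,
        IsDiffIneqAdd (ssAlpha n) L (ssBS n) (ssBT n s) → n ≤ L.length) ∧
      ∀ L : List OpIneqAdd,
        IsBestDiffIneqAdd (ssAlpha n) L (ssBS n) (ssBT n s) → n ≤ L.length := by
  have hdiff : ∀ L : List OpIneqAdd,
      IsDiffIneqAdd (ssAlpha n) L (ssBS n) (ssBT n s) → n ≤ L.length := fun L hL => by
    simpa using le_length_of_forall_natCast_mem fun j hj =>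
      mem_map_cut_of_isDiffIneqAdd hpos hL hj
  exact ⟨hdiff, fun L hL => hdiff L hL.1⟩

/-- For the SubsetSum instance, every diff from `β_S` to `β_T` under `F(≤≥,+)` has cost
at least `n`; in particular every best diff has cost at least `n`. -/
theorem subsetSum_diff_cost_lower_bound (n : ℕ) (s : ℕ → ℤ) (t : ℤ)
    (ht : 0 < t) (hs0 : s 0 = -t) (hpos : ∀ i, 1 ≤ i → i ≤ n → 0 < s i) :
    (∀ L : List OpIneqAdd,
        IsDiffIneqAdd (ssAlpha n) L (ssBS n) (ssBT n s) → n ≤ L.length) ∧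
      ∀ L : List OpIneqAdd,
        IsBestDiffIneqAdd (ssAlpha n) L (ssBS n) (ssBT n s) → n ≤ L.length :=
  subsetSum_diff_cost_lower_bound_general n s hpos
end

section
/- For the SubsetSum instance, the best diffs from β_S to β_T under the family F(R,+) have cost n if and only if the best diffs from β_S to β_T under the family F(≤≥,+) have cost n. -/
open scoped Classical

/-- An operation of the family `F(R,+)`: reals `a ≤ z` and an increment `b`, with condition
`A ∈ [a, z]` and modifier `B ← B + b`. -/
structure OpRangeAdd where
  a : ℝ
  z : ℝ
  hle : a ≤ z
  b : ℝ

/-- The condition of an operation of `F(R,+)`, evaluated on an `A`-value `v`. -/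
def OpRangeAdd.cond (f : OpRangeAdd) (v : ℤ) : Prop :=
  f.a ≤ (v : ℝ) ∧ (v : ℝ) ≤ f.z

/-- Applying an operation of `F(R,+)`: every key whose `A`-value lies in `[a, z]` gets its
`B`-value incremented by `b`; other keys are unchanged. -/
noncomputable def OpRangeAdd.apply {K : Type*} (α : K → ℤ) (f : OpRangeAdd) (β : K → ℝ) :
    K → ℝ :=
  fun k => if f.cond (α k) then β k + f.b else β k

/-- Successive application of a finite sequence of operations of `F(R,+)`. -/
noncomputable def applyOpsRangeAdd {K : Type*} (α : K → ℤ) (L : List OpRangeAdd)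
    (β : K → ℝ) : K → ℝ :=
  L.foldl (fun β' f => f.apply α β') β

/-- `L` is a diff from `βS` to `βT` under `F(R,+)`. -/
def IsDiffRangeAdd {K : Type*} (α : K → ℤ) (L : List OpRangeAdd) (βS βT : K → ℝ) : Prop :=
  applyOpsRangeAdd α L βS = βT

/-- `L` is a best diff under `F(R,+)`: a diff of minimum cost (number of operations). -/
def IsBestDiffRangeAdd {K : Type*} (α : K → ℤ) (L : List OpRangeAdd) (βS βT : K → ℝ) :
    Prop :=
  IsDiffRangeAdd α L βS βT ∧
    ∀ L' : List OpRangeAdd, IsDiffRangeAdd α L' βS βT → L.length ≤ L'.length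
/-!
On the keys `0, …, n` a range operation adds `b` exactly to the keys `p ≤ k < q` for some
`0 ≤ p ≤ q ≤ n + 1`, i.e. it adds `+b` at `p` and `-b` at `q` to the difference sequence
`D j = b_j - b_{j-1}` (with `b_{-1} = b_{n+1} = 0`). Regard it as an edge `pq` on the vertices
`0, …, n + 1`: every connected component then has `D`-sum zero, and since `D j = s j > 0` for
`1 ≤ j ≤ n`, every component contains `0` or `n + 1`. So there are at most two components and at
least `n` edges; with exactly `n` edges, `0` and `n + 1` lie in different components and the
component of `0` yields `S ⊆ {1, …, n}` with `∑ S = -s 0 = t`. Conversely, such an `S` gives `n`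
inequality operations, and every inequality operation acts on `{0, …, n}` as a range operation.
-/

open Finset

theorem exists_label_eq_on_edges_card_le {α : Type*} [DecidableEq α] (V : Finset α) :
    ∀ E : List (α × α), ∃ c : α → α,
      (∀ e ∈ E, c e.1 = c e.2) ∧ #V ≤ #(V.image c) + E.length
  | [] => ⟨id, by simp, by simp⟩
  | (x, y) :: E => by
    obtain ⟨c, hc, hcard⟩ := exists_label_eq_on_edges_card_le V E
    let c' := fun z => if c z = c x then c y else c z
    refine ⟨c', ?_, ?_⟩
    · simp only [List.mem_cons, forall_eq_or_imp]
      exact ⟨by simp [c'], fun e he => by simp only [c', hc e he]⟩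
    · have hsub : V.image c ⊆ insert (c x) (V.image c') := by
        intro v hv
        obtain ⟨z, hz, rfl⟩ := mem_image.mp hv
        by_cases h : c z = c x
        · simp [h]
        · exact mem_insert_of_mem (mem_image.mpr ⟨z, hz, if_neg h⟩)
      have := (card_le_card hsub).trans (card_insert_le _ _)
      simp only [List.length_cons]
      omega

section NetFlow

variable {ι α : Type*} [DecidableEq α]

def netFlow (p q : ι → α) (w : ι → ℝ) (L : List ι) (j : α) : ℝ :=
  (L.map fun i => (if p i = j then w i else 0) - (if q i = j then w i else 0)).sum

variable {p q : ι → α} {w : ι → ℝ}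

@[simp]
theorem netFlow_nil (j : α) : netFlow p q w [] j = 0 := rfl

theorem netFlow_cons (i : ι) (L : List ι) (j : α) :
    netFlow p q w (i :: L) j =
      (if p i = j then w i else 0) - (if q i = j then w i else 0) + netFlow p q w L j := by
  simp [netFlow]

theorem sum_netFlow_eq_zero {L : List ι} (T : Finset α) (hT : ∀ i ∈ L, p i ∈ T ↔ q i ∈ T) :
    ∑ j ∈ T, netFlow p q w L j = 0 := by
  induction L with
  | nil => simp
  | cons i L ih =>
    simp only [List.forall_mem_cons] at hT
    simp only [netFlow_cons, sum_add_distrib, sum_sub_distrib, sum_ite_eq, hT.1, sub_self,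
      ih hT.2, add_zero]

theorem sum_range_succ_netFlow {p q : ι → ℕ} {L : List ι} (hpq : ∀ i ∈ L, p i ≤ q i) (k : ℕ) :
    ∑ j ∈ range (k + 1), netFlow p q w L j =
      (L.map fun i => if p i ≤ k ∧ k < q i then w i else 0).sum := by
  induction L with
  | nil => simp
  | cons i L ih =>
    obtain ⟨hpqi, hpqL⟩ := List.forall_mem_cons.mp hpq
    simp only [netFlow_cons, sum_add_distrib, sum_sub_distrib, sum_ite_eq, mem_range, ih hpqL,
      List.map_cons, List.sum_cons]
    congr 1
    split_ifs <;> first | omega | ring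

theorem card_le_length_add_two {L : List ι} (V : Finset α) (hV : ∀ i ∈ L, p i ∈ V ∧ q i ∈ V)
    {x y : α} (hx : x ∈ V) (hpos : ∀ j ∈ V, j ≠ x → j ≠ y → 0 < netFlow p q w L j) :
    #V ≤ L.length + 2 ∧ (#V = L.length + 2 →
      ∃ T ⊆ V, x ∈ T ∧ y ∉ T ∧ ∑ j ∈ T, netFlow p q w L j = 0) := by
  -- the fibres of `c` stand in for the connected components of the graph with edges `p i q i`
  obtain ⟨c, hc, hcard⟩ := exists_label_eq_on_edges_card_le V (L.map fun i => (p i, q i))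
  rw [List.length_map] at hcard
  have hfiber (v : α) : ∑ j ∈ V with c j = v, netFlow p q w L j = 0 := by
    refine sum_netFlow_eq_zero _ fun i hi => ?_
    simp [(hV i hi).1, (hV i hi).2, hc _ (List.mem_map_of_mem hi)]
  have himage : V.image c ⊆ {c x, c y} := by
    intro v hv
    obtain ⟨z, hz, rfl⟩ := mem_image.mp hv
    by_contra hzxy
    simp only [mem_insert, mem_singleton, not_or] at hzxy
    have : 0 < ∑ j ∈ V with c j = c z, netFlow p q w L j :=
      sum_pos (fun j hj => by
        obtain ⟨hjV, hjz⟩ := mem_filter.mp hj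
        exact hpos j hjV (by rintro rfl; exact hzxy.1 hjz.symm)
          (by rintro rfl; exact hzxy.2 hjz.symm)) ⟨z, mem_filter.mpr ⟨hz, rfl⟩⟩
    exact this.ne' (hfiber _)
  have htwo := (card_le_card himage).trans card_le_two
  refine ⟨by omega, fun hV2 => ⟨V.filter (c · = c x), filter_subset _ _,
    mem_filter.mpr ⟨hx, rfl⟩, fun hy => ?_, hfiber _⟩⟩
  have hone : V.image c ⊆ {c x} := by simpa [(mem_filter.mp hy).2] using himage
  have := card_le_card hone
  rw [card_singleton] at this
  omega

end NetFlow

theorem applyOpsRangeAdd_apply {K : Type*} (α : K → ℤ) (L : List OpRangeAdd) (β : K → ℝ)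
    (k : K) :
    applyOpsRangeAdd α L β k = β k + (L.map fun f => if f.cond (α k) then f.b else 0).sum := by
  induction L generalizing β with
  | nil => simp [applyOpsRangeAdd]
  | cons f L ih =>
    rw [show applyOpsRangeAdd α (f :: L) β = applyOpsRangeAdd α L (f.apply α β) from rfl, ih]
    by_cases h : f.cond (α k) <;> simp [OpRangeAdd.apply, h, add_assoc]

theorem applyOpsIneqAdd_apply {K : Type*} (α : K → ℤ) (L : List OpIneqAdd) (β : K → ℝ)
    (k : K) :
    applyOpsIneqAdd α L β k = β k + (L.map fun f => if f.cond (α k) then f.b else 0).sum := by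
  induction L generalizing β with
  | nil => simp [applyOpsIneqAdd]
  | cons f L ih =>
    rw [show applyOpsIneqAdd α (f :: L) β = applyOpsIneqAdd α L (f.apply α β) from rfl, ih]
    by_cases h : f.cond (α k) <;> simp [OpIneqAdd.apply, h, add_assoc]

namespace OpIneqAdd

def toRange (lo hi : ℝ) (f : OpIneqAdd) : OpRangeAdd :=
  if f.dir then ⟨min f.a lo, f.a, min_le_left _ _, f.b⟩ else ⟨f.a, max f.a hi, le_max_left _ _, f.b⟩

theorem toRange_apply {K : Type*} {α : K → ℤ} {lo hi : ℝ} (hα : ∀ k, lo ≤ α k ∧ α k ≤ hi)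
    (f : OpIneqAdd) (β : K → ℝ) : (f.toRange lo hi).apply α β = f.apply α β := by
  funext k
  have := hα k
  have hcond : (f.toRange lo hi).cond (α k) ↔ f.cond (α k) := by
    unfold toRange; split_ifs with h <;> simp [cond, OpRangeAdd.cond, h] <;> grind
  have hb : (f.toRange lo hi).b = f.b := by unfold toRange; split_ifs <;> rfl
  simp only [OpRangeAdd.apply, apply, hcond, hb]

end OpIneqAdd

theorem applyOpsRangeAdd_map_toRange {K : Type*} {α : K → ℤ} {lo hi : ℝ}
    (hα : ∀ k, lo ≤ α k ∧ α k ≤ hi) (L : List OpIneqAdd) (β : K → ℝ) :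
    applyOpsRangeAdd α (L.map (OpIneqAdd.toRange lo hi)) β = applyOpsIneqAdd α L β := by
  induction L generalizing β with
  | nil => rfl
  | cons f L ih =>
    simp only [List.map_cons, applyOpsRangeAdd, applyOpsIneqAdd, List.foldl_cons,
      OpIneqAdd.toRange_apply hα] at ih ⊢
    exact ih _

namespace OpRangeAdd

noncomputable def lo (n : ℕ) (f : OpRangeAdd) : ℕ := (min ⌈f.a⌉ (n + 1)).toNat

noncomputable def hi (n : ℕ) (f : OpRangeAdd) : ℕ := (min (max ⌈f.a⌉ (⌊f.z⌋ + 1)) (n + 1)).toNat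

variable {n : ℕ} (f : OpRangeAdd)

theorem lo_le_hi : f.lo n ≤ f.hi n := by unfold lo hi; omega

theorem hi_le : f.hi n ≤ n + 1 := by unfold hi; omega

theorem cond_iff {k : ℕ} (hk : k ≤ n) : f.cond k ↔ f.lo n ≤ k ∧ k < f.hi n := by
  rw [cond, ← Int.ceil_le, ← Int.le_floor]
  unfold lo hi
  omega

end OpRangeAdd

theorem eq_of_forall_sum_range_succ_eq {M : Type*} [AddCommGroup M] {f g : ℕ → M} {n : ℕ}
    (h : ∀ k ≤ n, ∑ j ∈ range (k + 1), f j = ∑ j ∈ range (k + 1), g j) {j : ℕ} (hj : j ≤ n) :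
    f j = g j := by
  have hsum : ∀ k ≤ n + 1, ∑ i ∈ range k, f i = ∑ i ∈ range k, g i
    | 0, _ => by simp
    | k + 1, hk => h k (by omega)
  rw [← sum_range_succ_sub_sum f, ← sum_range_succ_sub_sum g, hsum _ (by omega),
    hsum _ (by omega)]

section SubsetSumInstance

variable {n : ℕ} {s : ℕ → ℤ}

theorem netFlow_eq_of_isDiffRangeAdd {L : List OpRangeAdd}
    (hL : IsDiffRangeAdd (ssAlpha n) L (ssBS n) (ssBT n s)) {j : ℕ} (hj : j ≤ n) :
    netFlow (OpRangeAdd.lo n) (OpRangeAdd.hi n) OpRangeAdd.b L j = (s j : ℝ) := by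
  refine eq_of_forall_sum_range_succ_eq (g := fun j => (s j : ℝ)) (fun k hk => ?_) hj
  have hk' := congrFun hL ⟨k, by omega⟩
  rw [applyOpsRangeAdd_apply] at hk'
  rw [sum_range_succ_netFlow (fun f _ => f.lo_le_hi)]
  simp only [ssAlpha, ssBS, ssBT, zero_add, OpRangeAdd.cond_iff _ hk] at hk'
  push_cast at hk'
  exact hk'

theorem le_length_and_exists_subsetSum_of_isDiffRangeAdd (hpos : ∀ i, 1 ≤ i → i ≤ n → 0 < s i)
    {L : List OpRangeAdd} (hL : IsDiffRangeAdd (ssAlpha n) L (ssBS n) (ssBT n s)) :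
    n ≤ L.length ∧ (L.length = n → ∃ S ⊆ Icc 1 n, ∑ k ∈ S, s k = -s 0) := by
  have hD {j : ℕ} (hj : j ≤ n) := netFlow_eq_of_isDiffRangeAdd hL hj
  have hV (f : OpRangeAdd) (_ : f ∈ L) : f.lo n ∈ range (n + 2) ∧ f.hi n ∈ range (n + 2) := by
    have := f.lo_le_hi (n := n)
    have := f.hi_le (n := n)
    simp only [mem_range]; omega
  have hDpos (j : ℕ) (hj : j ∈ range (n + 2)) (hj0 : j ≠ 0) (hjn : j ≠ n + 1) :
      0 < netFlow (OpRangeAdd.lo n) (OpRangeAdd.hi n) OpRangeAdd.b L j := by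
    have := mem_range.mp hj
    rw [hD (by omega)]
    exact_mod_cast hpos j (by omega) (by omega)
  obtain ⟨hcard, hsep⟩ := card_le_length_add_two _ hV (by simp) hDpos
  rw [card_range] at hcard hsep
  refine ⟨by omega, fun hlen => ?_⟩
  obtain ⟨T, hTV, h0T, hnT, hT⟩ := hsep (by omega)
  have hT' : ∀ j ∈ T.erase 0, j ∈ Icc 1 n := fun j hj => by
    obtain ⟨hj0, hjT⟩ := mem_erase.mp hj
    have := mem_range.mp (hTV hjT)
    have : j ≠ n + 1 := by rintro rfl; exact hnT hjT
    simp only [mem_Icc]; omega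
  refine ⟨T.erase 0, hT', ?_⟩
  rw [← sum_erase_add _ _ h0T, hD (Nat.zero_le n),
    sum_congr rfl fun j hj => hD (mem_Icc.mp (hT' j hj)).2] at hT
  exact_mod_cast eq_neg_of_add_eq_zero_left hT

end SubsetSumInstance

section Construction

variable {n : ℕ} {s : ℕ → ℤ} {S : Finset ℕ}

theorem sum_range_succ_eq_sum_Icc_of_subsetSum (hS : S ⊆ Icc 1 n) (hsum : ∑ k ∈ S, s k = -s 0) {j : ℕ}
    (hj : j ≤ n) :
    ∑ ℓ ∈ range (j + 1), s ℓ =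
      ∑ k ∈ Icc 1 n, if k ∈ S then (if j < k then -s k else 0) else (if k ≤ j then s k else 0) := by
  have hprefix : ∑ ℓ ∈ range (j + 1), s ℓ = s 0 + ∑ k ∈ Icc 1 n, if k ≤ j then s k else 0 := by
    rw [← sum_filter, ← add_sum_erase _ _ (mem_range.mpr j.succ_pos)]
    congr 1
    apply sum_congr _ fun _ _ => rfl
    ext k
    simp only [mem_erase, mem_range, mem_filter, mem_Icc]
    omega
  have hS0 : s 0 = -∑ k ∈ Icc 1 n, if k ∈ S then s k else 0 := by
    rw [← sum_filter, filter_mem_eq_inter, inter_eq_right.mpr hS, hsum, neg_neg]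
  rw [hprefix, hS0, neg_add_eq_sub, ← sum_sub_distrib]
  refine sum_congr rfl fun k _ => ?_
  split_ifs <;> omega

/-- Key `k ∈ S` contributes `-s k` below `k`, key `k ∉ S` contributes `s k` from `k` on; as
`∑ S = -s 0`, the contributions at key `j` add up to `b_j`. -/
noncomputable def subsetSumOps (n : ℕ) (s : ℕ → ℤ) (S : Finset ℕ) : List OpIneqAdd :=
  (Icc 1 n).toList.map fun k =>
    if k ∈ S then ⟨true, ((k - 1 : ℕ) : ℝ), -s k⟩ else ⟨false, k, s k⟩

theorem isDiffIneqAdd_subsetSumOps (hS : S ⊆ Icc 1 n) (hsum : ∑ k ∈ S, s k = -s 0) :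
    IsDiffIneqAdd (ssAlpha n) (subsetSumOps n s S) (ssBS n) (ssBT n s) := by
  funext j
  rw [applyOpsIneqAdd_apply, subsetSumOps, List.map_map, sum_map_toList, ssBS, zero_add, ssBT,
    sum_range_succ_eq_sum_Icc_of_subsetSum hS hsum (Nat.lt_succ_iff.mp j.isLt)]
  push_cast
  refine sum_congr rfl fun k hk => ?_
  have := (mem_Icc.mp hk).1
  by_cases hkS : k ∈ S <;> simp only [Function.comp_apply, hkS, if_true, if_false,
    OpIneqAdd.cond, ssAlpha, Int.cast_natCast, Nat.cast_le, Bool.false_eq_true]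
  exact if_congr (by omega) rfl rfl

theorem length_subsetSumOps : (subsetSumOps n s S).length = n := by
  simp [subsetSumOps]

end Construction

section Embedding

variable {n : ℕ} {s : ℕ → ℤ}

theorem isDiffRangeAdd_map_toRange {L : List OpIneqAdd}
    (hL : IsDiffIneqAdd (ssAlpha n) L (ssBS n) (ssBT n s)) :
    IsDiffRangeAdd (ssAlpha n) (L.map (OpIneqAdd.toRange 0 n)) (ssBS n) (ssBT n s) :=
  (applyOpsRangeAdd_map_toRange (fun k => ⟨by simp [ssAlpha], by simpa [ssAlpha] using k.is_le⟩)
    L _).trans hL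

theorem le_length_of_isDiffIneqAdd (hpos : ∀ i, 1 ≤ i → i ≤ n → 0 < s i) {L : List OpIneqAdd}
    (hL : IsDiffIneqAdd (ssAlpha n) L (ssBS n) (ssBT n s)) : n ≤ L.length := by
  simpa using (le_length_and_exists_subsetSum_of_isDiffRangeAdd hpos
    (isDiffRangeAdd_map_toRange hL)).1

end Embedding

theorem subsetSum_range_best_cost_iff_ineq_best_cost_general (n : ℕ) (s : ℕ → ℤ)
    (hpos : ∀ i, 1 ≤ i → i ≤ n → 0 < s i) :
    (∃ F : List OpRangeAdd,
        IsBestDiffRangeAdd (ssAlpha n) F (ssBS n) (ssBT n s) ∧ F.length = n) ↔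
      ∃ F : List OpIneqAdd,
        IsBestDiffIneqAdd (ssAlpha n) F (ssBS n) (ssBT n s) ∧ F.length = n := by
  constructor
  · rintro ⟨F, ⟨hF, -⟩, hlen⟩
    obtain ⟨S, hS, hsum⟩ := (le_length_and_exists_subsetSum_of_isDiffRangeAdd hpos hF).2 hlen
    refine ⟨subsetSumOps n s S, ⟨isDiffIneqAdd_subsetSumOps hS hsum, fun L hL => ?_⟩,
      length_subsetSumOps⟩
    rw [length_subsetSumOps]
    exact le_length_of_isDiffIneqAdd hpos hL
  · rintro ⟨F, ⟨hF, -⟩, hlen⟩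
    refine ⟨F.map (OpIneqAdd.toRange 0 n), ⟨isDiffRangeAdd_map_toRange hF, fun L hL => ?_⟩,
      by rw [List.length_map, hlen]⟩
    rw [List.length_map, hlen]
    exact (le_length_and_exists_subsetSum_of_isDiffRangeAdd hpos hL).1

/-- For the SubsetSum instance, the best diffs from `β_S` to `β_T` under `F(R,+)` have
cost `n` if and only if the best diffs from `β_S` to `β_T` under `F(≤≥,+)` have cost `n`. -/
theorem subsetSum_range_best_cost_iff_ineq_best_cost (n : ℕ) (s : ℕ → ℤ) (t : ℤ)
    (ht : 0 < t) (hs0 : s 0 = -t) (hpos : ∀ i, 1 ≤ i → i ≤ n → 0 < s i) :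
    (∃ F : List OpRangeAdd,
        IsBestDiffRangeAdd (ssAlpha n) F (ssBS n) (ssBT n s) ∧ F.length = n) ↔
      ∃ F : List OpIneqAdd,
        IsBestDiffIneqAdd (ssAlpha n) F (ssBS n) (ssBT n s) ∧ F.length = n :=
  subsetSum_range_best_cost_iff_ineq_best_cost_general n s hpos
end
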